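/- arXiv:1312.3839 — 6 statements merged into one kernel-verified Lean document; each statement's English description precedes it below -/
import Mathlib

section
/- Let f : [a,b] → [c,d] be a continuous bijection with inverse f⁻¹, and let F : [a,b] → ℝ be an antiderivative of f (i.e., F'(x) = f(x) for all x ∈ [a,b]). Then the function G(y) = y·f⁻¹(y) − F(f⁻¹(y)) is an antiderivative of f⁻¹ on [c,d], i.e., G'(y) = f⁻¹(y) for all y ∈ [c,d]. -/
/-!
Write `x = g y`, `x₀ = g y₀`. Then `G y - G y₀ - (y - y₀) x₀ = -(F x - F x₀ - f x (x - x₀))`.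
Being continuous and injective, `f` is monotone, so on the segment between `x₀` and `x` it takes
values between `y₀ = f x₀` and `y = f x`; the mean value inequality applied to `t ↦ F t - y t`
bounds the increment by `|y - y₀| |x - x₀|`. Finally `g`, the inverse of a continuous bijection
on a compact interval, is continuous, so `|x - x₀| → 0` as `y → y₀`.
-/

open Set

theorem IsCompact.continuousOn_image_of_leftInvOn {X Y : Type*} [TopologicalSpace X]
    [TopologicalSpace Y] [T2Space Y] {s : Set X} {f : X → Y} {g : Y → X} (hs : IsCompact s)
    (hf : ContinuousOn f s) (hgf : LeftInvOn g f s) : ContinuousOn g (f '' s) :=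
  continuousOn_iff_isClosed.2 fun t ht =>
    ⟨f '' (t ∩ s), ((hs.inter_left ht).image_of_continuousOn (hf.mono inter_subset_right)).isClosed,
      by rw [← hgf.image_inter', inter_eq_left.2 (image_mono inter_subset_right)]⟩

theorem ContinuousOn.mapsTo_uIcc_of_injOn {α δ : Type*} [ConditionallyCompleteLinearOrder α]
    [TopologicalSpace α] [OrderTopology α] [DenselyOrdered α] [LinearOrder δ] [TopologicalSpace δ]
    [OrderClosedTopology δ] {f : α → δ} {a b : α}
    (hf : ContinuousOn f (uIcc a b)) (hinj : InjOn f (uIcc a b)) :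
    MapsTo f (uIcc a b) (uIcc (f a) (f b)) := by
  rcases hf.strictMonoOn_of_injOn_Icc' inf_le_sup hinj with hmono | hanti
  · exact hmono.monotoneOn.mapsTo_uIcc
  · exact hanti.antitoneOn.mapsTo_uIcc

theorem abs_sub_sub_mul_le_of_mapsTo_uIcc {f F : ℝ → ℝ} {x₀ x : ℝ}
    (hF : ∀ t ∈ uIcc x₀ x, HasDerivWithinAt F (f t) (uIcc x₀ x) t)
    (hf : MapsTo f (uIcc x₀ x) (uIcc (f x₀) (f x))) :
    |F x - F x₀ - f x * (x - x₀)| ≤ |f x - f x₀| * |x - x₀| := by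
  have hderiv : ∀ t ∈ uIcc x₀ x,
      HasDerivWithinAt (fun t => F t - f x * t) (f t - f x) (uIcc x₀ x) t := fun t ht => by
    have := (hF t ht).sub ((hasDerivWithinAt_id t _).const_mul (f x))
    rwa [mul_one] at this
  have hbound : ∀ t ∈ uIcc x₀ x, ‖f t - f x‖ ≤ |f x - f x₀| := fun t ht => by
    simpa [Real.dist_eq, abs_sub_comm] using Real.dist_right_le_of_mem_uIcc (hf ht)
  have := Convex.norm_image_sub_le_of_norm_hasDerivWithin_le hderiv hbound (convex_uIcc x₀ x)
    left_mem_uIcc right_mem_uIcc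
  rw [Real.norm_eq_abs, Real.norm_eq_abs] at this
  convert this using 2
  ring

theorem hasDerivWithinAt_of_norm_sub_sub_le {𝕜 E : Type*} [NontriviallyNormedField 𝕜]
    [NormedAddCommGroup E] [NormedSpace 𝕜 E] {G g : 𝕜 → E} {s : Set 𝕜} {y₀ : 𝕜}
    (hg : ContinuousWithinAt g s y₀)
    (hG : ∀ y ∈ s, ‖G y - G y₀ - (y - y₀) • g y₀‖ ≤ ‖g y - g y₀‖ * ‖y - y₀‖) :
    HasDerivWithinAt G (g y₀) s y₀ := by
  refine hasDerivWithinAt_iff_isLittleO.2 (Asymptotics.isLittleO_iff.2 fun ε hε => ?_)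
  filter_upwards [self_mem_nhdsWithin, hg.eventually (Metric.closedBall_mem_nhds _ hε)]
    with y hy hgy
  rw [dist_eq_norm] at hgy
  exact (hG y hy).trans (mul_le_mul_of_nonneg_right hgy (norm_nonneg _))

theorem inverse_antideriv_general
    (a b c d : ℝ)
    (f g F : ℝ → ℝ)
    (hf_cont : ContinuousOn f (Icc a b))
    (hf_bij : Set.BijOn f (Icc a b) (Icc c d))
    (hgf : ∀ x ∈ Icc a b, g (f x) = x)
    (hF : ∀ x ∈ Icc a b, HasDerivWithinAt F (f x) (Icc a b) x) :
    ∀ y ∈ Icc c d,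
      HasDerivWithinAt (fun y => y * g y - F (g y)) (g y) (Icc c d) y := by
  have hfg : RightInvOn g f (Icc c d) := hf_bij.surjOn.leftInvOn_of_rightInvOn hgf
  have hg_maps : MapsTo g (Icc c d) (Icc a b) := LeftInvOn.mapsTo hgf hf_bij.surjOn
  have hg_cont : ContinuousOn g (Icc c d) :=
    hf_bij.image_eq ▸ isCompact_Icc.continuousOn_image_of_leftInvOn hf_cont hgf
  intro y₀ hy₀
  refine hasDerivWithinAt_of_norm_sub_sub_le (hg_cont y₀ hy₀) fun y hy => ?_
  have hsub : uIcc (g y₀) (g y) ⊆ Icc a b := uIcc_subset_Icc (hg_maps hy₀) (hg_maps hy)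
  have key := abs_sub_sub_mul_le_of_mapsTo_uIcc (fun t ht => (hF t (hsub ht)).mono hsub)
    ((hf_cont.mono hsub).mapsTo_uIcc_of_injOn (hf_bij.injOn.mono hsub))
  rw [hfg hy, hfg hy₀] at key
  calc ‖y * g y - F (g y) - (y₀ * g y₀ - F (g y₀)) - (y - y₀) • g y₀‖
      = |F (g y) - F (g y₀) - y * (g y - g y₀)| := by
        rw [Real.norm_eq_abs, ← abs_neg, smul_eq_mul]; ring_nf
    _ ≤ |y - y₀| * |g y - g y₀| := key
    _ = ‖g y - g y₀‖ * ‖y - y₀‖ := mul_comm _ _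

theorem inverse_antideriv
    (a b c d : ℝ) (hab : a < b) (hcd : c < d)
    (f g F : ℝ → ℝ)
    (hf_cont : ContinuousOn f (Icc a b))
    (hf_bij : Set.BijOn f (Icc a b) (Icc c d))
    (hgf : ∀ x ∈ Icc a b, g (f x) = x)
    (hfg : ∀ y ∈ Icc c d, f (g y) = y)
    (hF : ∀ x ∈ Icc a b, HasDerivWithinAt F (f x) (Icc a b) x) :
    ∀ y ∈ Icc c d,
      HasDerivWithinAt (fun y => y * g y - F (g y)) (g y) (Icc c d) y :=
  inverse_antideriv_general a b c d f g F hf_cont hf_bij hgf hF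
end

section
/- Let f : [a,b] → [c,d] be a continuous strictly decreasing bijection (so f(a) = d, f(b) = c). Then ∫_{c}^{d} f⁻¹(y) dy − a·(d−c) = ∫_{a}^{b} (f(x) − c) dx. -/
open Set MeasureTheory intervalIntegral

theorem inverse_integral_decreasing
    (a b c d : ℝ) (hab : a < b) (hcd : c < d)
    (f g : ℝ → ℝ)
    (hf_cont : ContinuousOn f (Icc a b))
    (hf_anti : StrictAntiOn f (Icc a b))
    (hf_surj : Set.SurjOn f (Icc a b) (Icc c d))
    (hf_maps : Set.MapsTo f (Icc a b) (Icc c d))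
    (hfa : f a = d) (hfb : f b = c)
    (hgf : ∀ x ∈ Icc a b, g (f x) = x)
    (hfg : ∀ y ∈ Icc c d, f (g y) = y) :
    (∫ y in c..d, g y) - a * (d - c) = ∫ x in a..b, (f x - c) := by
  -- g maps [c,d] into [a,b]
  have hg_mem : ∀ y ∈ Icc c d, g y ∈ Icc a b := by
    intro y hy
    obtain ⟨x, hx, hfx⟩ := hf_surj hy
    rw [← hfx, hgf x hx]; exact hx
  -- key order equivalence
  have key : ∀ y ∈ Icc c d, ∀ x ∈ Icc a b, (y ≤ f x ↔ x ≤ g y) := by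
    intro y hy x hx
    conv_lhs => rw [← hfg y hy]
    exact hf_anti.le_iff_ge (hg_mem y hy) hx
  -- g is strictly antitone on [c,d]
  have hg_anti : StrictAntiOn g (Icc c d) := by
    intro y1 hy1 y2 hy2 h12
    have : f (g y1) < f (g y2) := by rw [hfg y1 hy1, hfg y2 hy2]; exact h12
    exact (hf_anti.lt_iff_gt (hg_mem y1 hy1) (hg_mem y2 hy2)).mp this
  -- the region under the graph
  set S : Set (ℝ × ℝ) := {p | p.1 ∈ Icc a b ∧ p.2 ∈ Icc c d ∧ p.2 ≤ f p.1} with hSdef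
  have hS_eq : S = (Icc a b ×ˢ Icc c d) ∩ (fun p : ℝ × ℝ => f p.1 - p.2) ⁻¹' Ici 0 := by
    ext p
    simp only [hSdef, mem_setOf_eq, mem_inter_iff, mem_prod, mem_preimage, mem_Ici,
      sub_nonneg]
    tauto
  have hφ : ContinuousOn (fun p : ℝ × ℝ => f p.1 - p.2) (Icc a b ×ˢ Icc c d) := by
    exact (hf_cont.comp continuous_fst.continuousOn (fun p hp => hp.1)).sub
      continuous_snd.continuousOn
  have hS_closed : IsClosed S := by
    rw [hS_eq]
    exact hφ.preimage_isClosed_of_isClosed (isClosed_Icc.prod isClosed_Icc) isClosed_Ici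
  have hS_meas : MeasurableSet S := hS_closed.measurableSet
  -- Fubini in both directions
  have hA : (volume : Measure (ℝ × ℝ)) S
      = ∫⁻ x in Icc a b, ENNReal.ofReal (f x - c) := by
    rw [Measure.volume_eq_prod, Measure.prod_apply hS_meas]
    rw [← lintegral_indicator measurableSet_Icc _]
    refine lintegral_congr fun x => ?_
    by_cases hx : x ∈ Icc a b
    · have hfx := hf_maps hx
      have : Prod.mk x ⁻¹' S = Icc c (f x) := by
        ext y
        simp only [hSdef, mem_preimage, mem_setOf_eq, mem_Icc]
        constructor
        · rintro ⟨-, ⟨h1, -⟩, h3⟩; exact ⟨h1, h3⟩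
        · rintro ⟨h1, h3⟩; exact ⟨hx, ⟨h1, h3.trans hfx.2⟩, h3⟩
      rw [this, Real.volume_Icc, indicator_of_mem hx]
    · have : Prod.mk x ⁻¹' S = ∅ := by
        ext y
        simp only [hSdef, mem_preimage, mem_setOf_eq, mem_empty_iff_false, iff_false]
        intro h; exact hx h.1
      rw [this, measure_empty, indicator_of_notMem hx]
  have hB : (volume : Measure (ℝ × ℝ)) S
      = ∫⁻ y in Icc c d, ENNReal.ofReal (g y - a) := by
    rw [Measure.volume_eq_prod, Measure.prod_apply_symm hS_meas]
    rw [← lintegral_indicator measurableSet_Icc _]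
    refine lintegral_congr fun y => ?_
    by_cases hy : y ∈ Icc c d
    · have hgy := hg_mem y hy
      have : (fun x => (x, y)) ⁻¹' S = Icc a (g y) := by
        ext x
        simp only [hSdef, mem_preimage, mem_setOf_eq, mem_Icc]
        constructor
        · rintro ⟨hx, -, h3⟩; exact ⟨hx.1, (key y hy x hx).mp h3⟩
        · rintro ⟨h1, h2⟩
          have hx : x ∈ Icc a b := ⟨h1, h2.trans hgy.2⟩
          exact ⟨hx, hy, (key y hy x hx).mpr h2⟩
      rw [this, Real.volume_Icc, indicator_of_mem hy]
    · have : (fun x => (x, y)) ⁻¹' S = ∅ := by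
        ext x
        simp only [hSdef, mem_preimage, mem_setOf_eq, mem_empty_iff_false, iff_false]
        intro h; exact hy h.2.1
      rw [this, measure_empty, indicator_of_notMem hy]
  -- express the two interval integrals via lintegrals
  have hf_int : ∫ x in a..b, (f x - c)
      = (∫⁻ x in Icc a b, ENNReal.ofReal (f x - c)).toReal := by
    rw [intervalIntegral.integral_of_le hab.le,
      MeasureTheory.integral_eq_lintegral_of_nonneg_ae]
    · congr 1
      exact setLIntegral_congr Ioc_ae_eq_Icc
    · filter_upwards [ae_restrict_mem measurableSet_Ioc] with x hx
      have := (hf_maps (Ioc_subset_Icc_self hx)).1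
      simp only [Pi.zero_apply, sub_nonneg]; exact this
    · exact ((hf_cont.mono Ioc_subset_Icc_self).aestronglyMeasurable
        measurableSet_Ioc).sub aestronglyMeasurable_const
  have hg_intble : IntervalIntegrable g volume c d := by
    apply AntitoneOn.intervalIntegrable
    rw [uIcc_of_le hcd.le]
    exact hg_anti.antitoneOn
  have hg_int : ∫ y in c..d, (g y - a)
      = (∫⁻ y in Icc c d, ENNReal.ofReal (g y - a)).toReal := by
    rw [intervalIntegral.integral_of_le hcd.le,
      MeasureTheory.integral_eq_lintegral_of_nonneg_ae]
    · congr 1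
      exact setLIntegral_congr Ioc_ae_eq_Icc
    · filter_upwards [ae_restrict_mem measurableSet_Ioc] with y hy
      have := (hg_mem y (Ioc_subset_Icc_self hy)).1
      simp only [Pi.zero_apply, sub_nonneg]; exact this
    · exact (hg_intble.1).aestronglyMeasurable.sub aestronglyMeasurable_const
  have hgsub : (∫ y in c..d, g y) - a * (d - c) = ∫ y in c..d, (g y - a) := by
    rw [intervalIntegral.integral_sub hg_intble intervalIntegrable_const,
      intervalIntegral.integral_const]
    simp only [smul_eq_mul]; ring
  rw [hgsub, hg_int, hf_int, ← hA, ← hB]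
end

section
/- Let f : [a,b] → [c,d] be a continuous strictly increasing bijection with f(a) = c, and let y ∈ [c,d]. Then the region D = {(t,x) : c ≤ t ≤ y, a ≤ x ≤ f⁻¹(t)} ⊆ ℝ² equals the region D' = {(t,x) : a ≤ x ≤ f⁻¹(y), f(x) ≤ t ≤ y}, and consequently (by Fubini/Tonelli) ∫_{c}^{y} (f⁻¹(t) − a) dt = ∫_{a}^{f⁻¹(y)} (y − f(x)) dx. -/
/-!
Since `f` is strictly increasing with inverse `g`, `f x ≤ t ↔ x ≤ g t`, which gives the two
descriptions of the region under the graph of `g`. Its area, computed by vertical slices, is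
`∫_c^y (g t - a) dt`, and by horizontal slices `∫_a^{g y} (y - f x) dx`. Only monotonicity
enters the measure theory: a monotone function on a compact interval extends to a monotone
function on `ℝ`, so the region is measurable and the integrands are integrable.
-/

open Set MeasureTheory intervalIntegral

section InverseRegion

variable {α β : Type*} [LinearOrder α] [LinearOrder β] {f : α → β} {g : β → α}

theorem StrictMonoOn.le_iff_le_of_rightInvOn {s : Set α} {t : Set β} (hf : StrictMonoOn f s)
    (hg : MapsTo g t s) (hfg : RightInvOn g f t) {x : α} {y : β} (hx : x ∈ s) (hy : y ∈ t) :
    f x ≤ y ↔ x ≤ g y := by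
  conv_lhs => rw [← hfg.eq hy]
  exact hf.le_iff_le hx (hg hy)

theorem StrictMonoOn.monotoneOn_of_rightInvOn {s : Set α} {t : Set β} (hf : StrictMonoOn f s)
    (hg : MapsTo g t s) (hfg : RightInvOn g f t) : MonotoneOn g t := fun y hy z hz hyz =>
  (hf.le_iff_le_of_rightInvOn hg hfg (hg hy) hz).mp (by rwa [hfg.eq hy])

theorem StrictMonoOn.setOf_le_rightInvOn_eq {a b : α} {c d : β}
    (hf : StrictMonoOn f (Icc a b)) (hg : MapsTo g (Icc c d) (Icc a b))
    (hfg : RightInvOn g f (Icc c d)) (hfa : f a = c) {y : β} (hy : y ∈ Icc c d) :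
    {p : β × α | c ≤ p.1 ∧ p.1 ≤ y ∧ a ≤ p.2 ∧ p.2 ≤ g p.1} =
      {p : β × α | a ≤ p.2 ∧ p.2 ≤ g y ∧ f p.2 ≤ p.1 ∧ p.1 ≤ y} := by
  have hgy := hg hy
  ext ⟨t, x⟩
  constructor
  · rintro ⟨hct, hty, hax, hxt⟩
    have ht : t ∈ Icc c d := ⟨hct, hty.trans hy.2⟩
    have hx : x ∈ Icc a b := ⟨hax, hxt.trans (hg ht).2⟩
    exact ⟨hax, hxt.trans (hf.monotoneOn_of_rightInvOn hg hfg ht hy hty),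
      (hf.le_iff_le_of_rightInvOn hg hfg hx ht).mpr hxt, hty⟩
  · rintro ⟨hax, hxy, hxt, hty⟩
    have hx : x ∈ Icc a b := ⟨hax, hxy.trans hgy.2⟩
    have hct : c ≤ t := hfa ▸ (hf.monotoneOn ⟨le_rfl, hax.trans hx.2⟩ hx hax).trans hxt
    have ht : t ∈ Icc c d := ⟨hct, hty.trans hy.2⟩
    exact ⟨hct, hty, hax, (hf.le_iff_le_of_rightInvOn hg hfg hx ht).mp hxt⟩

end InverseRegion

theorem volume_region_between_cc_eq_lintegral {α : Type*} [MeasurableSpace α] {μ : Measure α}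
    {φ ψ : α → ℝ} {s : Set α} (hs : MeasurableSet s)
    (hS : MeasurableSet {p : α × ℝ | p.1 ∈ s ∧ p.2 ∈ Icc (φ p.1) (ψ p.1)}) :
    μ.prod volume {p : α × ℝ | p.1 ∈ s ∧ p.2 ∈ Icc (φ p.1) (ψ p.1)} =
      ∫⁻ x in s, ENNReal.ofReal (ψ x - φ x) ∂μ := by
  have hslice (x : α) :
      volume (Prod.mk x ⁻¹' {p : α × ℝ | p.1 ∈ s ∧ p.2 ∈ Icc (φ p.1) (ψ p.1)}) =
        s.indicator (fun x => ENNReal.ofReal (ψ x - φ x)) x := by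
    by_cases hx : x ∈ s
    · rw [indicator_of_mem hx, ← Real.volume_Icc]
      congr 1
      ext
      simp [hx]
    · simp [hx, preimage]
  simp_rw [Measure.prod_apply hS, hslice, lintegral_indicator hs]

theorem MeasureTheory.Measure.prod_real_preimage_swap {α β : Type*} [MeasurableSpace α]
    [MeasurableSpace β] {μ : Measure α} {ν : Measure β} [SFinite μ] [SFinite ν]
    (s : Set (β × α)) :
    (μ.prod ν).real (Prod.swap ⁻¹' s) = (ν.prod μ).real s :=
  congrArg ENNReal.toReal <|
    MeasurePreserving.measure_preimage_equiv (f := MeasurableEquiv.prodComm)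
      measurePreserving_swap s

theorem measurableSet_region_between_cc_of_monotoneOn {φ ψ : ℝ → ℝ} {u v : ℝ}
    (hφ : MonotoneOn φ (Icc u v)) (hψ : MonotoneOn ψ (Icc u v)) :
    MeasurableSet {p : ℝ × ℝ | p.1 ∈ Icc u v ∧ p.2 ∈ Icc (φ p.1) (ψ p.1)} := by
  obtain ⟨Φ, hΦ, hφΦ⟩ := hφ.exists_monotone_extension
    (bddBelow_Icc.mono hφ.image_Icc_subset) (bddAbove_Icc.mono hφ.image_Icc_subset)
  obtain ⟨Ψ, hΨ, hψΨ⟩ := hψ.exists_monotone_extension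
    (bddBelow_Icc.mono hψ.image_Icc_subset) (bddAbove_Icc.mono hψ.image_Icc_subset)
  have hext : {p : ℝ × ℝ | p.1 ∈ Icc u v ∧ p.2 ∈ Icc (φ p.1) (ψ p.1)} =
      {p : ℝ × ℝ | p.1 ∈ Icc u v ∧ p.2 ∈ Icc (Φ p.1) (Ψ p.1)} := by
    ext p
    simp only [mem_ofPred_eq]
    constructor <;> rintro ⟨hp, hp'⟩ <;> refine ⟨hp, ?_⟩
    · rwa [← hφΦ hp, ← hψΨ hp]
    · rwa [hφΦ hp, hψΨ hp]
  rw [hext]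
  exact measurableSet_region_between_cc hΦ.measurable hΨ.measurable measurableSet_Icc

theorem volume_real_region_between_cc_eq_integral_of_monotoneOn {φ ψ : ℝ → ℝ} {u v : ℝ}
    (huv : u ≤ v) (hφ : MonotoneOn φ (Icc u v)) (hψ : MonotoneOn ψ (Icc u v))
    (hφψ : ∀ t ∈ Icc u v, φ t ≤ ψ t) :
    volume.real {p : ℝ × ℝ | p.1 ∈ Icc u v ∧ p.2 ∈ Icc (φ p.1) (ψ p.1)} =
      ∫ t in u..v, ψ t - φ t := by
  have hint : IntegrableOn (fun t => ψ t - φ t) (Icc u v) :=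
    (hψ.integrableOn_isCompact isCompact_Icc).sub (hφ.integrableOn_isCompact isCompact_Icc)
  have hnonneg : ∀ t ∈ Icc u v, 0 ≤ ψ t - φ t := fun t ht => sub_nonneg.mpr (hφψ t ht)
  rw [measureReal_def, Measure.volume_eq_prod, volume_region_between_cc_eq_lintegral
      measurableSet_Icc (measurableSet_region_between_cc_of_monotoneOn hφ hψ),
    ← ofReal_integral_eq_lintegral_ofReal hint
      (ae_restrict_of_forall_mem measurableSet_Icc hnonneg),
    ENNReal.toReal_ofReal (setIntegral_nonneg measurableSet_Icc hnonneg),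
    integral_of_le huv, integral_Icc_eq_integral_Ioc]

theorem fubini_region_eq_and_integral_general
    (a b c d : ℝ)
    (f g : ℝ → ℝ)
    (hf_mono : StrictMonoOn f (Icc a b))
    (hf_bij : Set.BijOn f (Icc a b) (Icc c d))
    (hfa : f a = c)
    (hgf : ∀ x ∈ Icc a b, g (f x) = x)
    (hfg : ∀ y ∈ Icc c d, f (g y) = y) :
    ∀ y ∈ Icc c d,
      {p : ℝ × ℝ | c ≤ p.1 ∧ p.1 ≤ y ∧ a ≤ p.2 ∧ p.2 ≤ g p.1} =
        {p : ℝ × ℝ | a ≤ p.2 ∧ p.2 ≤ g y ∧ f p.2 ≤ p.1 ∧ p.1 ≤ y} ∧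
      ∫ t in c..y, (g t - a) = ∫ x in a..(g y), (y - f x) := by
  intro y hy
  have hg : MapsTo g (Icc c d) (Icc a b) := LeftInvOn.mapsTo hgf hf_bij.surjOn
  have hgy := hg hy
  have hregion := hf_mono.setOf_le_rightInvOn_eq hg hfg hfa hy
  refine ⟨hregion, ?_⟩
  have hg_mono : MonotoneOn g (Icc c y) :=
    (hf_mono.monotoneOn_of_rightInvOn hg hfg).mono (Icc_subset_Icc_right hy.2)
  have hf_monoOn : MonotoneOn f (Icc a (g y)) :=
    hf_mono.monotoneOn.mono (Icc_subset_Icc_right hgy.2)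
  calc ∫ t in c..y, (g t - a)
      = volume.real {p : ℝ × ℝ | p.1 ∈ Icc c y ∧ p.2 ∈ Icc a (g p.1)} :=
        (volume_real_region_between_cc_eq_integral_of_monotoneOn hy.1 monotoneOn_const
          hg_mono fun t ht => (hg ⟨ht.1, ht.2.trans hy.2⟩).1).symm
    _ = volume.real
          (Prod.swap ⁻¹' {p : ℝ × ℝ | p.1 ∈ Icc a (g y) ∧ p.2 ∈ Icc (f p.1) y}) := by
        congr 1
        exact (Set.ext fun _ => and_assoc).trans
          (hregion.trans (Set.ext fun _ => and_assoc.symm))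
    _ = volume.real {p : ℝ × ℝ | p.1 ∈ Icc a (g y) ∧ p.2 ∈ Icc (f p.1) y} := by
        rw [Measure.volume_eq_prod]
        exact Measure.prod_real_preimage_swap _
    _ = ∫ x in a..(g y), (y - f x) :=
        volume_real_region_between_cc_eq_integral_of_monotoneOn hgy.1 hf_monoOn
          monotoneOn_const fun x hx =>
            (hf_mono.le_iff_le_of_rightInvOn hg hfg ⟨hx.1, hx.2.trans hgy.2⟩ hy).mpr hx.2

theorem fubini_region_eq_and_integral
    (a b c d : ℝ) (hab : a < b) (hcd : c < d)
    (f g : ℝ → ℝ)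
    (hf_cont : ContinuousOn f (Icc a b))
    (hf_mono : StrictMonoOn f (Icc a b))
    (hf_bij : Set.BijOn f (Icc a b) (Icc c d))
    (hfa : f a = c)
    (hgf : ∀ x ∈ Icc a b, g (f x) = x)
    (hfg : ∀ y ∈ Icc c d, f (g y) = y) :
    ∀ y ∈ Icc c d,
      {p : ℝ × ℝ | c ≤ p.1 ∧ p.1 ≤ y ∧ a ≤ p.2 ∧ p.2 ≤ g p.1} =
        {p : ℝ × ℝ | a ≤ p.2 ∧ p.2 ≤ g y ∧ f p.2 ≤ p.1 ∧ p.1 ≤ y} ∧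
      ∫ t in c..y, (g t - a) = ∫ x in a..(g y), (y - f x) :=
  fubini_region_eq_and_integral_general a b c d f g hf_mono hf_bij hfa hgf hfg
end

section
/- (Stieltjes change of variable for inverse functions) Let f : [a,b] → [c,d] be a continuous strictly increasing bijection. Then for y ∈ [c,d], the Riemann–Stieltjes integral ∫_{c}^{y} f⁻¹(t) dt equals the Riemann–Stieltjes integral ∫_{a}^{f⁻¹(y)} x df(x). -/
open Set MeasureTheory intervalIntegral

/-!
A strictly increasing `φ` carrying `[a, s]` onto `[φ a, φ s]` pushes the Stieltjes
measure `dφ` on `(a, s]` forward to Lebesgue measure on `(φ a, φ s]`: both have the same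
distribution function, since `{x ∈ (a, s] | φ x ≤ t} = (a, x_t]` where `φ x_t` is `t` clamped
to `[φ a, φ s]`. Changing variables `t = φ x` then turns `∫_c^y g t dt` into
`∫_{(a, g y]} g (φ x) dφ(x) = ∫_{(a, g y]} x dφ(x)`.
-/

theorem Set.le_projIcc_iff_of_mem_Ioc {α : Type*} [LinearOrder α] {a b u : α} (h : a ≤ b)
    (hu : u ∈ Ioc a b) (t : α) :
    u ≤ projIcc a b h t ↔ u ≤ t := by
  rw [coe_projIcc, le_max_iff, le_min_iff]
  constructor
  · rintro (hua | ⟨-, hut⟩)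
    · exact absurd hu.1 hua.not_gt
    · exact hut
  · exact fun hut => Or.inr ⟨hu.2, hut⟩

theorem Real.volume_Iic_inter_Ioc {a b : ℝ} (h : a ≤ b) (t : ℝ) :
    volume (Iic t ∩ Ioc a b) = ENNReal.ofReal (projIcc a b h t - a) := by
  rw [inter_comm, Ioc_inter_Iic, Real.volume_Ioc, coe_projIcc, ← max_sub_sub_right, sub_self,
    ENNReal.ofReal_max, ENNReal.ofReal_zero, zero_max]

theorem StieltjesFunction.map_measure_restrict_Ioc (f : StieltjesFunction ℝ) {a s : ℝ}
    (has : a ≤ s) (hmono : StrictMonoOn f (Icc a s))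
    (hsurj : SurjOn f (Icc a s) (Icc (f a) (f s))) :
    (f.measure.restrict (Ioc a s)).map f = volume.restrict (Ioc (f a) (f s)) := by
  have : IsFiniteMeasure (f.measure.restrict (Ioc a s)) :=
    isFiniteMeasure_restrict.2 (by simp [StieltjesFunction.measure_Ioc])
  refine Measure.ext_of_Iic _ _ fun t => ?_
  have hfas : f a ≤ f s := f.mono has
  obtain ⟨x, hx, hfx⟩ := hsurj (projIcc (f a) (f s) hfas t).2
  have hiff : ∀ z ∈ Ioc a s, f z ≤ t ↔ z ≤ x := fun z hz => by
    have hfz : f z ∈ Ioc (f a) (f s) :=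
      ⟨hmono (left_mem_Icc.2 has) (Ioc_subset_Icc_self hz) hz.1, f.mono hz.2⟩
    rw [← le_projIcc_iff_of_mem_Ioc hfas hfz, ← hfx,
      hmono.le_iff_le (Ioc_subset_Icc_self hz) hx]
  have hpre : f ⁻¹' Iic t ∩ Ioc a s = Ioc a x := by
    ext z
    constructor
    · rintro ⟨hzt, hz⟩
      exact ⟨hz.1, (hiff z hz).1 hzt⟩
    · rintro ⟨hza, hzx⟩
      have hz : z ∈ Ioc a s := ⟨hza, hzx.trans hx.2⟩
      exact ⟨(hiff z hz).2 hzx, hz⟩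
  rw [Measure.map_apply f.mono.measurable measurableSet_Iic,
    Measure.restrict_apply (f.mono.measurable measurableSet_Iic), hpre,
    StieltjesFunction.measure_Ioc, hfx, Measure.restrict_apply measurableSet_Iic,
    Real.volume_Iic_inter_Ioc hfas]

theorem stieltjes_change_of_variable_inverse_general
    (a b c d : ℝ)
    (φ : StieltjesFunction ℝ) (g : ℝ → ℝ)
    (hφ_mono : StrictMonoOn φ (Icc a b))
    (hφ_bij : Set.BijOn φ (Icc a b) (Icc c d))
    (hφa : φ a = c)
    (hgf : ∀ x ∈ Icc a b, g (φ x) = x)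
    (hfg : ∀ y ∈ Icc c d, φ (g y) = y) :
    ∀ y ∈ Icc c d,
      ∫ t in c..y, g t = ∫ x in Set.Ioc a (g y), x ∂φ.measure := by
  intro y hy
  have hg_maps : MapsTo g (Icc c d) (Icc a b) := LeftInvOn.mapsTo hgf hφ_bij.surjOn
  have hg_mono : MonotoneOn g (Icc c d) :=
    Function.monotoneOn_of_rightInvOn_of_mapsTo hφ_mono.monotoneOn hfg hg_maps
  have hcy : Icc c y ⊆ Icc c d := Icc_subset_Icc_right hy.2
  have hsub : Icc a (g y) ⊆ Icc a b := Icc_subset_Icc_right (hg_maps hy).2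
  have hsurj : SurjOn φ (Icc a (g y)) (Icc (φ a) (φ (g y))) := by
    rw [hφa, hfg y hy]
    exact RightInvOn.surjOn (fun t ht => hfg t (hcy ht))
      fun t ht => ⟨(hg_maps (hcy ht)).1, hg_mono (hcy ht) hy ht.2⟩
  have hmap := φ.map_measure_restrict_Ioc (hg_maps hy).1 (hφ_mono.mono hsub) hsurj
  rw [hφa, hfg y hy] at hmap
  rw [intervalIntegral.integral_of_le hy.1, ← hmap, integral_map φ.mono.measurable.aemeasurable]
  · exact setIntegral_congr_fun measurableSet_Ioc fun x hx => hgf x (hsub (Ioc_subset_Icc_self hx))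
  · rw [hmap]
    exact (aemeasurable_restrict_of_monotoneOn measurableSet_Ioc
      (hg_mono.mono (Ioc_subset_Icc_self.trans hcy))).aestronglyMeasurable

theorem stieltjes_change_of_variable_inverse
    (a b c d : ℝ) (hab : a < b) (hcd : c < d)
    (φ : StieltjesFunction ℝ) (g : ℝ → ℝ)
    (hφ_cont : ContinuousOn φ (Icc a b))
    (hφ_mono : StrictMonoOn φ (Icc a b))
    (hφ_bij : Set.BijOn φ (Icc a b) (Icc c d))
    (hφa : φ a = c) (hφb : φ b = d)
    (hgf : ∀ x ∈ Icc a b, g (φ x) = x)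
    (hfg : ∀ y ∈ Icc c d, φ (g y) = y) :
    ∀ y ∈ Icc c d,
      ∫ t in c..y, g t = ∫ x in Set.Ioc a (g y), x ∂φ.measure :=
  stieltjes_change_of_variable_inverse_general a b c d φ g hφ_mono hφ_bij hφa hgf hfg
end

section
/- (Stieltjes integration by parts) Let f : [a,b] → ℝ be monotone and continuous and g(x) = x. Then ∫_{a}^{b} g df + ∫_{a}^{b} f dg = f(b)·b − f(a)·a, i.e., ∫_{a}^{b} x df(x) = b·f(b) − a·f(a) − ∫_{a}^{b} f(x) dx. -/
/-!
Split `x = (x - a) + a`. The constant part contributes `a (φ b - φ a)`, and by the layer-cake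
formula `∫_{(a,b]} (x - a) dφ = ∫_0^∞ φ((a + t, b]) dt = ∫_a^b (φ b - φ t) dt`.
-/

open Set MeasureTheory intervalIntegral

theorem StieltjesFunction.measureReal_Ioc (φ : StieltjesFunction ℝ) {a b : ℝ} (hab : a ≤ b) :
    φ.measure.real (Ioc a b) = φ b - φ a := by
  rw [measureReal_def, φ.measure_Ioc, ENNReal.toReal_ofReal (sub_nonneg.2 (φ.mono hab))]

theorem StieltjesFunction.measureReal_restrict_Ioc_Ioi (φ : StieltjesFunction ℝ) {a b c : ℝ}
    (hac : a ≤ c) : (φ.measure.restrict (Ioc a b)).real (Ioi c) = max (φ b - φ c) 0 := by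
  rw [measureReal_def, Measure.restrict_apply _root_.measurableSet_Ioi, inter_comm, Ioc_inter_Ioi,
    max_eq_right hac, φ.measure_Ioc, ENNReal.toReal_ofReal']

theorem Monotone.integral_Ioi_max_sub {f : ℝ → ℝ} (hf : Monotone f) {c d : ℝ} (hcd : c ≤ d) :
    ∫ t in Ioi c, max (f d - f t) 0 = ∫ t in c..d, (f d - f t) := by
  rw [setIntegral_eq_of_subset_of_forall_sdiff_eq_zero measurableSet_Ioi Ioc_subset_Ioi_self,
    integral_of_le hcd]
  · refine setIntegral_congr_fun measurableSet_Ioc fun t ht => ?_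
    exact max_eq_left (sub_nonneg.2 (hf ht.2))
  · rintro t ⟨ht, hnot⟩
    exact max_eq_right (sub_nonpos.2 (hf (not_le.1 fun h => hnot ⟨ht, h⟩).le))

theorem StieltjesFunction.integral_Ioc_sub_left (φ : StieltjesFunction ℝ) {a b : ℝ} (hab : a ≤ b) :
    ∫ x in Ioc a b, (x - a) ∂φ.measure = ∫ t in a..b, (φ b - φ t) := by
  have hint : IntegrableOn (fun x => x - a) (Ioc a b) φ.measure :=
    (continuous_id.sub continuous_const).integrableOn_Ioc
  have hnonneg : 0 ≤ᵐ[φ.measure.restrict (Ioc a b)] fun x => x - a :=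
    ae_restrict_of_forall_mem measurableSet_Ioc fun x hx => sub_nonneg.2 hx.1.le
  have hlevel : ∀ t ∈ Ioi (0 : ℝ), (φ.measure.restrict (Ioc a b)).real {x | t < x - a} =
      max (φ b - φ (a + t)) 0 := by
    intro t ht
    have hset : {x | t < x - a} = Ioi (a + t) := by ext x; simp [lt_sub_iff_add_lt']
    rw [hset, φ.measureReal_restrict_Ioc_Ioi (le_add_of_nonneg_right (le_of_lt ht))]
  have hshift := (φ.mono.comp (monotone_id.const_add a)).integral_Ioi_max_sub (sub_nonneg.2 hab)
  simp only [Function.comp_apply, id, add_sub_cancel] at hshift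
  rw [hint.integral_eq_integral_meas_lt hnonneg,
    setIntegral_congr_fun _root_.measurableSet_Ioi hlevel, hshift,
    integral_comp_add_left (fun t => φ b - φ t), add_zero, add_sub_cancel]

theorem stieltjes_integration_by_parts_general
    (a b : ℝ) (hab : a ≤ b)
    (φ : StieltjesFunction ℝ) :
    ∫ x in Set.Ioc a b, x ∂φ.measure =
      b * φ b - a * φ a - ∫ x in a..b, φ x := by
  have hsplit := integral_add (μ := φ.measure.restrict (Ioc a b)) (f := fun x => x - a)
    (g := fun _ => a) (continuous_id.sub continuous_const).integrableOn_Ioc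
    continuous_const.integrableOn_Ioc
  simp only [sub_add_cancel] at hsplit
  rw [hsplit, φ.integral_Ioc_sub_left hab, setIntegral_const, φ.measureReal_Ioc hab,
    integral_sub intervalIntegrable_const φ.mono.intervalIntegrable,
    intervalIntegral.integral_const, smul_eq_mul, smul_eq_mul]
  ring

theorem stieltjes_integration_by_parts
    (a b : ℝ) (hab : a ≤ b)
    (φ : StieltjesFunction ℝ)
    (hφ_cont : Continuous φ) :
    ∫ x in Set.Ioc a b, x ∂φ.measure =
      b * φ b - a * φ a - ∫ x in a..b, φ x :=
  stieltjes_integration_by_parts_general a b hab φ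
end

section
/- (Generalized formula) Let f : [a,b] → [c,d] be a C¹ strictly increasing bijection and H : ℝ × ℝ → ℝ be C¹. Then ∫_{c}^{y} H(t, f⁻¹(t)) dt = y·H(y, f⁻¹(y)) − c·H(c, f⁻¹(c)) − ∫_{a}^{f⁻¹(y)} f(x) · (d/dx)[H(f(x), x)] dx for y ∈ [c,d]. -/
/-!
Substituting `t = f x` turns `∫_c^y H(t, f⁻¹ t) dt` into `∫_a^{f⁻¹ y} H(f x, x) f'(x) dx`, and
integrating by parts moves the derivative from `f` onto `x ↦ H(f x, x)`; the boundary terms come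
out as stated because `f a = c`. As `f` is only `C¹` on the closed interval, both steps are run with
the one-sided derivative `derivWithin f (Icc a b)`, which is continuous on `[a, b]` and agrees with
`deriv f` on `(a, b)`.
-/

open Set MeasureTheory intervalIntegral

theorem StrictMonoOn.continuousOn_of_leftInvOn {α β : Type*} [LinearOrder α] [TopologicalSpace α]
    [OrderTopology α] [LinearOrder β] [TopologicalSpace β] [OrderTopology β]
    {s : Set α} {t : Set β} [s.OrdConnected] [t.OrdConnected] {f : α → β} {g : β → α}
    (hf : StrictMonoOn f s) (hst : BijOn f s t) (hg : LeftInvOn g f s) :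
    ContinuousOn g t := by
  let e : s ≃o t := (hf.orderIso f s).trans (OrderIso.setCongr _ _ hst.image_eq)
  have hrestrict : t.domRestrict g = Subtype.val ∘ e.symm := by
    funext y
    obtain ⟨x, hx⟩ := e.surjective y
    rw [← hx, Function.comp_apply, OrderIso.symm_apply_apply]
    exact hg x.2
  rw [continuousOn_iff_continuous_domRestrict, hrestrict]
  exact continuous_subtype_val.comp e.symm.continuous

theorem MonotoneOn.eq_left_of_image_Icc_eq {α β : Type*} [Preorder α] [PartialOrder β]
    {f : α → β} {a b : α} {c d : β} (hf : MonotoneOn f (Icc a b)) (hab : a ≤ b) (hcd : c ≤ d)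
    (himage : f '' Icc a b = Icc c d) : f a = c :=
  (hf.map_isLeast (isLeast_Icc hab)).unique (himage ▸ isLeast_Icc hcd)

theorem intervalIntegral.integral_congr_of_eqOn_Ioo {E : Type*} [NormedAddCommGroup E]
    [NormedSpace ℝ E] {a b : ℝ} {φ ψ : ℝ → E} (hab : a ≤ b) (h : EqOn φ ψ (Ioo a b)) :
    ∫ t in a..b, φ t = ∫ t in a..b, ψ t := by
  rw [integral_of_le hab, integral_of_le hab, integral_Ioc_eq_integral_Ioo,
    integral_Ioc_eq_integral_Ioo]
  exact setIntegral_congr_fun measurableSet_Ioo h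

section ContDiffOnIcc

variable {a b x : ℝ}

theorem integral_deriv_eq_integral_derivWithin_Icc (φ : ℝ → ℝ → ℝ) (u : ℝ → ℝ)
    (hx : x ∈ Icc a b) :
    ∫ t in a..x, φ t (deriv u t) = ∫ t in a..x, φ t (derivWithin u (Icc a b) t) :=
  integral_congr_of_eqOn_Ioo hx.1 fun t ht => by
    rw [derivWithin_of_mem_nhds (Icc_mem_nhds ht.1 (ht.2.trans_le hx.2))]

variable {u v : ℝ → ℝ}

theorem ContDiffOn.hasDerivAt_derivWithin_Icc (hu : ContDiffOn ℝ 1 u (Icc a b)) (hx : x ∈ Ioo a b) :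
    HasDerivAt u (derivWithin u (Icc a b) x) x :=
  (hu.differentiableOn one_ne_zero x (Ioo_subset_Icc_self hx)).hasDerivWithinAt.hasDerivAt
    (Icc_mem_nhds hx.1 hx.2)

theorem ContDiffOn.integral_comp_mul_deriv_Icc {h : ℝ → ℝ} (hab : a < b)
    (hu : ContDiffOn ℝ 1 u (Icc a b)) (hh : ContinuousOn h (u '' Icc a b)) (hx : x ∈ Icc a b) :
    ∫ t in a..x, h (u t) * deriv u t = ∫ s in u a..u x, h s := by
  have hsub : uIcc a x ⊆ Icc a b := uIcc_of_le hx.1 ▸ Icc_subset_Icc_right hx.2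
  rw [integral_deriv_eq_integral_derivWithin_Icc (fun t d => h (u t) * d) u hx]
  refine integral_comp_mul_deriv'' (hu.continuousOn.mono hsub) (fun t ht => ?_)
    ((hu.continuousOn_derivWithin (uniqueDiffOn_Icc hab) le_rfl).mono hsub)
    (hh.mono (image_mono hsub))
  rw [min_eq_left hx.1, max_eq_right hx.1] at ht
  exact (hu.hasDerivAt_derivWithin_Icc (Ioo_subset_Ioo_right hx.2 ht)).hasDerivWithinAt

theorem ContDiffOn.integral_mul_deriv_Icc (hab : a < b) (hu : ContDiffOn ℝ 1 u (Icc a b))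
    (hv : ContDiffOn ℝ 1 v (Icc a b)) (hx : x ∈ Icc a b) :
    ∫ t in a..x, u t * deriv v t = u x * v x - u a * v a - ∫ t in a..x, deriv u t * v t := by
  have hsub : uIcc a x ⊆ Icc a b := uIcc_of_le hx.1 ▸ Icc_subset_Icc_right hx.2
  have hIoo : Ioo (min a x) (max a x) ⊆ Ioo a b := by
    rw [min_eq_left hx.1, max_eq_right hx.1]; exact Ioo_subset_Ioo_right hx.2
  rw [integral_deriv_eq_integral_derivWithin_Icc (fun t d => u t * d) v hx,
    integral_deriv_eq_integral_derivWithin_Icc (fun t d => d * v t) u hx]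
  exact integral_mul_deriv_eq_deriv_mul_of_hasDerivAt (hu.continuousOn.mono hsub)
    (hv.continuousOn.mono hsub) (fun t ht => hu.hasDerivAt_derivWithin_Icc (hIoo ht))
    (fun t ht => hv.hasDerivAt_derivWithin_Icc (hIoo ht))
    (((hu.continuousOn_derivWithin (uniqueDiffOn_Icc hab) le_rfl).mono hsub).intervalIntegrable)
    (((hv.continuousOn_derivWithin (uniqueDiffOn_Icc hab) le_rfl).mono hsub).intervalIntegrable)

end ContDiffOnIcc

theorem generalized_inverse_integral_formula_general
    (a b c d : ℝ) (hab : a < b)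
    (f g : ℝ → ℝ) (H : ℝ × ℝ → ℝ)
    (hf_smooth : ContDiffOn ℝ 1 f (Icc a b))
    (hf_mono : StrictMonoOn f (Icc a b))
    (hf_bij : Set.BijOn f (Icc a b) (Icc c d))
    (hgf : ∀ x ∈ Icc a b, g (f x) = x)
    (hH : ContDiff ℝ 1 H) :
    ∀ y ∈ Icc c d,
      ∫ t in c..y, H (t, g t) =
        y * H (y, g y) - c * H (c, g c) -
          ∫ x in a..(g y), f x * deriv (fun x => H (f x, x)) x := by
  intro y hy
  have hinv : LeftInvOn g f (Icc a b) := fun x hx => hgf x hx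
  have hgy : g y ∈ Icc a b := hinv.mapsTo hf_bij.surjOn hy
  have hfgy : f (g y) = y := hinv.rightInvOn_image (hf_bij.image_eq ▸ hy)
  have hfa : f a = c :=
    hf_mono.monotoneOn.eq_left_of_image_Icc_eq hab.le (hy.1.trans hy.2) hf_bij.image_eq
  have hgc : g c = a := hfa ▸ hgf a (left_mem_Icc.2 hab.le)
  have hcont : ContinuousOn (fun t => H (t, g t)) (f '' Icc a b) := by
    rw [hf_bij.image_eq]
    exact hH.continuous.comp_continuousOn
      (continuousOn_id.prodMk (hf_mono.continuousOn_of_leftInvOn hf_bij hinv))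
  set G : ℝ → ℝ := fun x => H (f x, x)
  have hG : ContDiffOn ℝ 1 G (Icc a b) := hH.comp_contDiffOn (hf_smooth.prodMk contDiffOn_id)
  have hsubst : ∫ t in c..y, H (t, g t) = ∫ t in a..g y, deriv f t * G t := calc
    _ = ∫ t in f a..f (g y), H (t, g t) := by rw [hfa, hfgy]
    _ = ∫ t in a..g y, H (f t, g (f t)) * deriv f t :=
      (hf_smooth.integral_comp_mul_deriv_Icc hab hcont hgy).symm
    _ = ∫ t in a..g y, deriv f t * G t := integral_congr fun t ht => by
      rw [uIcc_of_le hgy.1] at ht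
      rw [hgf t (Icc_subset_Icc_right hgy.2 ht), mul_comm]
  rw [hsubst, hf_smooth.integral_mul_deriv_Icc hab hG hgy]
  simp only [G, hfgy, hfa, hgc]
  ring

theorem generalized_inverse_integral_formula
    (a b c d : ℝ) (hab : a < b) (hcd : c < d)
    (f g : ℝ → ℝ) (H : ℝ × ℝ → ℝ)
    (hf_smooth : ContDiffOn ℝ 1 f (Icc a b))
    (hf_mono : StrictMonoOn f (Icc a b))
    (hf_bij : Set.BijOn f (Icc a b) (Icc c d))
    (hgf : ∀ x ∈ Icc a b, g (f x) = x)
    (hfg : ∀ y ∈ Icc c d, f (g y) = y)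
    (hH : ContDiff ℝ 1 H) :
    ∀ y ∈ Icc c d,
      ∫ t in c..y, H (t, g t) =
        y * H (y, g y) - c * H (c, g c) -
          ∫ x in a..(g y), f x * deriv (fun x => H (f x, x)) x :=
  generalized_inverse_integral_formula_general a b c d hab f g H hf_smooth hf_mono hf_bij hgf hH
end
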